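/- arXiv:1310.4060 — 2 statements merged into one kernel-verified Lean document; each statement's English description precedes it below -/
import Mathlib

section
/- There is no binary systematic code of length n = d + k + 1, dimension k ≥ 3, and minimum distance d = 6. Equivalently, every binary systematic code with k ≥ 3 and d = 6 satisfies n ≥ d + k + 2 = ∑_{j=0}^{k-1} ⌈6/2^j⌉. -/
open Finset

/-- `C` has minimum (Hamming) distance exactly `d`. -/
def minDistIs {n : ℕ} {A : Type*} [DecidableEq A] (C : Finset (Fin n → A)) (d : ℕ) : Prop :=
  (∀ x ∈ C, ∀ y ∈ C, x ≠ y → d ≤ hammingDist x y) ∧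
    ∃ x ∈ C, ∃ y ∈ C, x ≠ y ∧ hammingDist x y = d

/-- `C` is systematic: projection onto the first `k` coordinates is a bijection onto `A^k`. -/
def systematicOn {n k : ℕ} {A : Type*} (h : k ≤ n) (C : Finset (Fin n → A)) : Prop :=
  Set.BijOn (fun c (i : Fin k) => c (Fin.castLE h i)) (C : Set (Fin n → A)) Set.univ

/-- The Griesmer sum `∑_{j=0}^{k-1} ⌈d / q^j⌉`. -/
def griesmerSum (q d k : ℕ) : ℤ := ∑ j ∈ Finset.range k, ⌈(d : ℚ) / (q : ℚ) ^ j⌉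

/-- Auxiliary: the j-th bit of `s : Fin 8` as an element of `Fin 2`. -/
def bit8 (s : Fin 8) (j : ℕ) : Fin 2 := if s.val.testBit j then 1 else 0

lemma bit8_inj : ∀ s t : Fin 8,
    bit8 s 0 = bit8 t 0 → bit8 s 1 = bit8 t 1 → bit8 s 2 = bit8 t 2 → s = t := by decide

/-- The message vector in `Fin k → Fin 2` corresponding to `s : Fin 8`. -/
def msg8 (k : ℕ) (s : Fin 8) (i : Fin k) : Fin 2 :=
  if i.val < 3 then bit8 s i.val else 0

lemma msg8_inj {k : ℕ} (hk : 3 ≤ k) {s t : Fin 8} (h : msg8 k s = msg8 k t) : s = t := by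
  have h0 := congrFun h ⟨0, by omega⟩
  have h1 := congrFun h ⟨1, by omega⟩
  have h2 := congrFun h ⟨2, by omega⟩
  simp only [msg8] at h0 h1 h2
  norm_num at h0 h1 h2
  exact bit8_inj s t h0 h1 h2

lemma sum_pair_le (a : Fin 8 → Fin 2) :
    (∑ s : Fin 8, ∑ t : Fin 8, if a s = a t then (0:ℕ) else 1) ≤ 32 := by
  classical
  set p : Fin 8 → ℕ := fun s => if a s = 0 then 1 else 0 with hp
  set q : Fin 8 → ℕ := fun s => if a s = 0 then 0 else 1 with hq
  have key : ∀ x y : Fin 2, (if x = y then (0:ℕ) else 1)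
      = (if x = 0 then (1:ℕ) else 0) * (if y = 0 then (0:ℕ) else 1)
      + (if x = 0 then (0:ℕ) else 1) * (if y = 0 then (1:ℕ) else 0) := by decide
  have hsum : (∑ s : Fin 8, ∑ t : Fin 8, if a s = a t then (0:ℕ) else 1)
      = (∑ s : Fin 8, p s) * (∑ t : Fin 8, q t)
        + (∑ s : Fin 8, q s) * (∑ t : Fin 8, p t) := by
    calc (∑ s : Fin 8, ∑ t : Fin 8, if a s = a t then (0:ℕ) else 1)
        = ∑ s : Fin 8, ∑ t : Fin 8, (p s * q t + q s * p t) :=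
          Finset.sum_congr rfl fun s _ => Finset.sum_congr rfl fun t _ => key (a s) (a t)
      _ = ∑ s : Fin 8, (p s * ∑ t : Fin 8, q t + q s * ∑ t : Fin 8, p t) := by
          refine Finset.sum_congr rfl fun s _ => ?_
          rw [Finset.sum_add_distrib, ← Finset.mul_sum, ← Finset.mul_sum]
      _ = _ := by
          rw [Finset.sum_add_distrib, ← Finset.sum_mul, ← Finset.sum_mul]
  have hpq : (∑ s : Fin 8, p s) + (∑ s : Fin 8, q s) = 8 := by
    rw [← Finset.sum_add_distrib]
    have h1 : ∀ s : Fin 8, p s + q s = 1 := fun s => by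
      by_cases h : a s = 0 <;> simp [hp, hq, h]
    simp [h1]
  rw [hsum]
  set m := ∑ s : Fin 8, p s with hm
  have hq8 : (∑ s : Fin 8, q s) = 8 - m := by omega
  have hm8 : m ≤ 8 := by omega
  rw [hq8]
  interval_cases m <;> omega

lemma hd_eq {n : ℕ} (x y : Fin n → Fin 2) :
    hammingDist x y = ∑ i, if x i = y i then (0:ℕ) else 1 := by
  simp [hammingDist, Finset.card_filter, ite_not]

set_option maxHeartbeats 1000000 in
theorem stmt12 {n k : ℕ}
    (C : Finset (Fin n → Fin 2)) (hk : 3 ≤ k) (hkn : k ≤ n)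
    (hcard : C.card = 2 ^ k)
    (hsys : systematicOn hkn C)
    (hmin : minDistIs C 6) :
    n ≥ 6 + k + 2 := by
  classical
  -- choose codewords projecting to the 8 messages
  have hex : ∀ s : Fin 8, ∃ x, x ∈ C ∧
      (fun i : Fin k => x (Fin.castLE hkn i)) = msg8 k s := by
    intro s
    rcases hsys.surjOn (Set.mem_univ (msg8 k s)) with ⟨x, hx, hpx⟩
    exact ⟨x, hx, hpx⟩
  choose c hcC hproj using hex
  have hcoord : ∀ (s : Fin 8) (i : Fin n) (hik : i.val < k),
      c s i = msg8 k s ⟨i.val, hik⟩ := by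
    intro s i hik
    have h2 : Fin.castLE hkn ⟨i.val, hik⟩ = i := rfl
    have := congrFun (hproj s) ⟨i.val, hik⟩
    rwa [h2] at this
  have hge : ∀ s t : Fin 8, s ≠ t → 6 ≤ hammingDist (c s) (c t) := by
    intro s t hst
    refine hmin.1 _ (hcC s) _ (hcC t) ?_
    intro hEq
    exact hst (msg8_inj hk (by rw [← hproj s, ← hproj t, hEq]))
  have h1 : (336:ℕ) ≤ ∑ s : Fin 8, ∑ t : Fin 8, hammingDist (c s) (c t) := by
    have per : ∀ s : Fin 8, (42:ℕ) ≤ ∑ t : Fin 8, hammingDist (c s) (c t) := by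
      intro s
      have e : (42:ℕ) = ∑ _t ∈ Finset.univ.erase s, 6 := by
        rw [Finset.sum_const, Finset.card_erase_of_mem (Finset.mem_univ s)]
        simp
      rw [e]
      refine le_trans (Finset.sum_le_sum fun t ht => hge s t ?_)
        (Finset.sum_le_sum_of_subset (Finset.erase_subset _ _))
      exact fun h => (Finset.mem_erase.mp ht).1 h.symm
    calc (336:ℕ) = ∑ _s : Fin 8, 42 := by simp
    _ ≤ _ := Finset.sum_le_sum fun s _ => per s
  have h2 : (∑ s : Fin 8, ∑ t : Fin 8, hammingDist (c s) (c t))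
      = ∑ i : Fin n, ∑ s : Fin 8, ∑ t : Fin 8, (if c s i = c t i then (0:ℕ) else 1) := by
    simp_rw [hd_eq]
    have hswap : ∀ s : Fin 8,
        (∑ t : Fin 8, ∑ i : Fin n, (if c s i = c t i then (0:ℕ) else 1))
        = ∑ i : Fin n, ∑ t : Fin 8, (if c s i = c t i then (0:ℕ) else 1) :=
      fun s => Finset.sum_comm
    simp_rw [hswap]
    exact Finset.sum_comm
  have h3 : ∀ i : Fin n,
      (∑ s : Fin 8, ∑ t : Fin 8, if c s i = c t i then (0:ℕ) else 1)
      ≤ if 3 ≤ i.val ∧ i.val < k then 0 else 32 := by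
    intro i
    by_cases hP : 3 ≤ i.val ∧ i.val < k
    · simp only [hP, if_true]
      have hz : ∀ s : Fin 8, c s i = 0 := by
        intro s
        rw [hcoord s i hP.2]
        simp [msg8, Nat.not_lt.2 hP.1]
      apply le_of_eq
      refine Finset.sum_eq_zero fun s _ => Finset.sum_eq_zero fun t _ => ?_
      simp [hz s, hz t]
    · simp only [hP, if_false]
      exact sum_pair_le (fun s => c s i)
  have h4 : (∑ i : Fin n, if 3 ≤ i.val ∧ i.val < k then (0:ℕ) else 32)
      = 96 + 32 * (n - k) := by
    rw [Fin.sum_univ_eq_sum_range (fun j => if 3 ≤ j ∧ j < k then (0:ℕ) else 32)]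
    rw [← Finset.sum_range_add_sum_Ico _ hkn]
    have h3k : (3:ℕ) ≤ k := hk
    rw [← Finset.sum_range_add_sum_Ico _ h3k]
    have e1 : (∑ j ∈ Finset.range 3, if 3 ≤ j ∧ j < k then (0:ℕ) else 32) = 96 := by
      simp [Finset.sum_range_succ]
    have e2 : (∑ j ∈ Finset.Ico 3 k, if 3 ≤ j ∧ j < k then (0:ℕ) else 32) = 0 := by
      refine Finset.sum_eq_zero fun j hj => ?_
      rw [Finset.mem_Ico] at hj
      simp [hj.1, hj.2]
    have e3 : (∑ j ∈ Finset.Ico k n, if 3 ≤ j ∧ j < k then (0:ℕ) else 32)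
        = 32 * (n - k) := by
      rw [Finset.sum_congr rfl (fun j hj => ?_), Finset.sum_const, Nat.card_Ico,
        smul_eq_mul, mul_comm]
      rw [Finset.mem_Ico] at hj
      have : ¬ (3 ≤ j ∧ j < k) := by omega
      simp [this]
    rw [e1, e2, e3]
  have h5 : (∑ i : Fin n, ∑ s : Fin 8, ∑ t : Fin 8, (if c s i = c t i then (0:ℕ) else 1))
      ≤ 96 + 32 * (n - k) := by
    rw [← h4]
    exact Finset.sum_le_sum fun i _ => h3 i
  rw [h2] at h1
  have h6 : (336:ℕ) ≤ 96 + 32 * (n - k) := le_trans h1 h5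
  omega
end

section
/- Every binary systematic code of dimension k ≥ 1 and minimum distance d ∈ {5, 6} satisfies the Griesmer bound: n ≥ ∑_{j=0}^{k-1} ⌈d/2^j⌉. -/
open Finset

/-!
Among the codewords, take the `2 ^ m` (with `m = min k 3`) whose information part vanishes
outside its first `m` coordinates. They agree on the other `k - m` information coordinates, so
only `m + (n - k)` coordinates separate them, and each coordinate separates at most half of the
ordered pairs. Plotkin's averaging argument then forces `n - k + m ≥ 6, 9, 11` for
`m = 1, 2, 3`, which is the Griesmer bound for `d = 6`; only the first three terms of
`∑ ⌈6 / 2 ^ j⌉` exceed `1`. For `d = 5`, appending a parity bit gives a systematic code of length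
`n + 1` in which all distances are at least `6`, and `⌈6 / 2 ^ j⌉ = ⌈5 / 2 ^ j⌉` for `j ≥ 1`.
-/

lemma two_mul_sum_sum_ite_ne_le_sq {α : Type*} (S : Finset α) (f : α → Fin 2) :
    2 * ∑ s ∈ S, ∑ t ∈ S, (if f s ≠ f t then 1 else 0) ≤ #S ^ 2 := by
  have hpt : ∀ a b : Fin 2,
      (if a ≠ b then 1 else 0 : ℤ) = a.val + b.val - 2 * a.val * b.val := by decide
  have : ((2 * ∑ s ∈ S, ∑ t ∈ S, (if f s ≠ f t then 1 else 0) : ℕ) : ℤ) ≤ ((#S ^ 2 : ℕ) : ℤ) := by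
    push_cast
    simp only [hpt, sum_sub_distrib, sum_add_distrib, sum_const, nsmul_eq_mul, ← mul_sum, ← sum_mul]
    -- with `A` ones in the column the sum is `2 A (#S - A)`
    nlinarith [sq_nonneg ((#S : ℤ) - 2 * ∑ s ∈ S, ((f s).val : ℤ))]
  exact_mod_cast this

section
variable {ι : Type*} [Fintype ι]

lemma hammingDist_eq_sum_of_forall_notMem_eq {x y : ι → Fin 2} {T : Finset ι}
    (h : ∀ i ∉ T, x i = y i) : hammingDist x y = ∑ i ∈ T, if x i ≠ y i then 1 else 0 := by
  classical
  rw [← card_filter]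
  exact congrArg card (by ext i; have := h i; simp only [mem_filter, mem_univ, true_and]; tauto)

lemma plotkin_bound {S : Finset (ι → Fin 2)} {T : Finset ι} {δ : ℕ}
    (hagree : ∀ x ∈ S, ∀ y ∈ S, ∀ i ∉ T, x i = y i)
    (hdist : ∀ x ∈ S, ∀ y ∈ S, x ≠ y → δ ≤ hammingDist x y) :
    2 * δ * (#S - 1) ≤ #T * #S := by
  have lower : δ * (#S * (#S - 1)) ≤ ∑ x ∈ S, ∑ y ∈ S, hammingDist x y := calc
    δ * (#S * (#S - 1)) = ∑ x ∈ S, ∑ y ∈ S.erase x, δ := by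
      rw [sum_congr rfl fun x hx => by rw [sum_const, card_erase_of_mem hx], sum_const]
      simp only [smul_eq_mul]; ring
    _ ≤ ∑ x ∈ S, ∑ y ∈ S.erase x, hammingDist x y :=
      sum_le_sum fun x hx => sum_le_sum fun y hy =>
        hdist x hx y (mem_of_mem_erase hy) (ne_of_mem_erase hy).symm
    _ ≤ ∑ x ∈ S, ∑ y ∈ S, hammingDist x y :=
      sum_le_sum fun x _ => sum_le_sum_of_subset (erase_subset x S)
  have upper : 2 * ∑ x ∈ S, ∑ y ∈ S, hammingDist x y ≤ #T * #S ^ 2 := calc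
    2 * ∑ x ∈ S, ∑ y ∈ S, hammingDist x y
        = ∑ i ∈ T, 2 * ∑ x ∈ S, ∑ y ∈ S, if x i ≠ y i then 1 else 0 := by
      rw [← mul_sum]; congr 1
      rw [sum_congr rfl fun x hx => sum_congr rfl fun y hy =>
        hammingDist_eq_sum_of_forall_notMem_eq (hagree x hx y hy)]
      simp only [sum_comm (s := T)]
    _ ≤ ∑ i ∈ T, #S ^ 2 := sum_le_sum fun i _ => two_mul_sum_sum_ite_ne_le_sq S (· i)
    _ = #T * #S ^ 2 := by rw [sum_const, smul_eq_mul]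
  rcases (#S).eq_zero_or_pos with h | h
  · simp [h]
  · refine Nat.le_of_mul_le_mul_right ?_ h
    nlinarith
end

lemma exists_subset_card_eq_of_systematicOn {n k m : ℕ} {A : Type*} [Fintype A] [Zero A]
    {C : Finset (Fin n → A)} {hkn : k ≤ n} (hsys : systematicOn hkn C) (hmk : m ≤ k) :
    ∃ S ⊆ C, #S = Fintype.card A ^ m ∧ ∀ x ∈ S, ∀ i : Fin n, m ≤ i → i < k → x i = 0 := by
  classical
  let pad (v : Fin m → A) (j : Fin k) : A := if h : j < m then v ⟨j, h⟩ else 0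
  choose c hcC hc using fun v => hsys.surjOn (Set.mem_univ (pad v))
  have hc' (v : Fin m → A) (j : Fin k) : c v (Fin.castLE hkn j) = pad v j := congrFun (hc v) j
  refine ⟨univ.image c, ?_, ?_, ?_⟩
  · simpa [subset_iff] using hcC
  · rw [card_image_of_injective, card_univ, Fintype.card_fun, Fintype.card_fin]
    intro v w hvw
    funext i
    have := hc' v (Fin.castLE hmk i)
    rw [hvw, hc'] at this
    simpa [pad] using this.symm
  · simp only [mem_image, mem_univ, true_and, forall_exists_index, forall_apply_eq_imp_iff]
    intro v i hmi hik
    simpa [pad, hmi.not_gt] using hc' v ⟨i, hik⟩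

lemma card_filter_lt_or_le {n m k : ℕ} (hmk : m ≤ k) (hkn : k ≤ n) :
    #{i : Fin n | i < m ∨ k ≤ i} = m + (n - k) := by
  rw [filter_or, card_union_of_disjoint (disjoint_filter.2 fun i _ h => by omega)]
  have := card_filter_add_card_filter_not (s := univ) (fun i : Fin n => (i : ℕ) < k)
  simp only [not_lt, card_univ, Fintype.card_fin, Fin.card_filter_val_lt] at this ⊢
  omega

lemma plotkin_bound_of_systematicOn {n k m δ : ℕ} {C : Finset (Fin n → Fin 2)} {hkn : k ≤ n}
    (hsys : systematicOn hkn C) (hmk : m ≤ k)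
    (hdist : ∀ x ∈ C, ∀ y ∈ C, x ≠ y → δ ≤ hammingDist x y) :
    2 * δ * (2 ^ m - 1) ≤ (m + (n - k)) * 2 ^ m := by
  obtain ⟨S, hSC, hS, hzero⟩ := exists_subset_card_eq_of_systematicOn hsys hmk
  rw [Fintype.card_fin] at hS
  rw [← hS, ← card_filter_lt_or_le hmk hkn]
  refine plotkin_bound (fun x hx y hy i hi => ?_) fun x hx y hy => hdist x (hSC hx) y (hSC hy)
  simp only [mem_filter, mem_univ, true_and, not_or, not_le, not_lt] at hi
  rw [hzero x hx i hi.1 hi.2, hzero y hy i hi.1 hi.2]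

open Fin.CommRing in
lemma sum_eq_sum_iff_even_hammingDist {ι : Type*} [Fintype ι] (x y : ι → Fin 2) :
    ∑ i, x i = ∑ i, y i ↔ Even (hammingDist x y) := by
  have hpt : ∀ a b : Fin 2, (if a ≠ b then 1 else 0 : Fin 2) = a - b := by decide
  have hcast : ((hammingDist x y : ℕ) : Fin 2) = ∑ i, x i - ∑ i, y i := by
    unfold hammingDist
    rw [card_filter, ← sum_sub_distrib]
    push_cast
    simp only [hpt]
  rw [← sub_eq_zero, ← hcast, Fin.natCast_eq_zero, even_iff_two_dvd]

def parityExtend {n : ℕ} (x : Fin n → Fin 2) : Fin (n + 1) → Fin 2 := Fin.snoc x (∑ i, x i)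

lemma parityExtend_injective {n : ℕ} : Function.Injective (@parityExtend n) :=
  fun x y h => by simpa [parityExtend] using congrArg Fin.init h

lemma hammingDist_parityExtend {n : ℕ} (x y : Fin n → Fin 2) :
    hammingDist (parityExtend x) (parityExtend y) = hammingDist x y + hammingDist x y % 2 := by
  have hpar : (if ∑ i, x i ≠ ∑ i, y i then 1 else 0) = hammingDist x y % 2 := by
    have := sum_eq_sum_iff_even_hammingDist x y
    rw [Nat.even_iff] at this
    split_ifs with h <;> omega
  have hsplit : hammingDist (parityExtend x) (parityExtend y)
      = hammingDist x y + if ∑ i, x i ≠ ∑ i, y i then 1 else 0 := by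
    unfold hammingDist
    rw [card_filter, card_filter, Fin.sum_univ_castSucc]
    simp only [parityExtend, Fin.snoc_castSucc, Fin.snoc_last]
  rw [hsplit, hpar]

lemma systematicOn_image_parityExtend {n k : ℕ} {C : Finset (Fin n → Fin 2)} {hkn : k ≤ n}
    (hsys : systematicOn hkn C) :
    systematicOn (hkn.trans n.le_succ) (C.image parityExtend) := by
  unfold systematicOn at hsys ⊢
  rw [coe_image, ← Set.bijOn_comp_iff parityExtend_injective.injOn]
  convert hsys using 1
  funext x i
  exact Fin.snoc_castSucc (α := fun _ => Fin 2) _ _ (Fin.castLE hkn i)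

lemma succ_le_hammingDist_image_parityExtend {n δ : ℕ} {C : Finset (Fin n → Fin 2)}
    (hδ : Odd δ) (hdist : ∀ x ∈ C, ∀ y ∈ C, x ≠ y → δ ≤ hammingDist x y) :
    ∀ x ∈ C.image parityExtend, ∀ y ∈ C.image parityExtend, x ≠ y →
      δ + 1 ≤ hammingDist x y := by
  simp only [mem_image]
  rintro _ ⟨x, hx, rfl⟩ _ ⟨y, hy, rfl⟩ hxy
  have := hdist x hx y hy (ne_of_apply_ne _ hxy)
  obtain ⟨r, rfl⟩ := hδ
  rw [hammingDist_parityExtend]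
  omega

lemma ceil_succ_div_eq_of_odd {d q : ℕ} (hd : Odd d) (hq : Even q) (hq0 : 0 < q) :
    ⌈((d + 1 : ℕ) : ℚ) / q⌉ = ⌈(d : ℚ) / q⌉ := by
  obtain ⟨c, hc⟩ : ∃ c, ⌈(d : ℚ) / q⌉ = c := ⟨_, rfl⟩
  have hq0' : (0 : ℚ) < q := by exact_mod_cast hq0
  have hlt := Int.ceil_lt_add_one ((d : ℚ) / q)
  have hle := Int.le_ceil ((d : ℚ) / q)
  rw [hc, div_le_iff₀ hq0'] at hle
  rw [hc] at hlt
  have hne : (d : ℤ) ≠ c * q := by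
    intro h
    have : Even (c * q : ℤ) := ((Int.even_coe_nat q).2 hq).mul_left c
    rw [← h, Int.even_coe_nat] at this
    exact Nat.not_even_iff_odd.2 hd this
  have hsucc : ((d + 1 : ℕ) : ℤ) ≤ c * q := by
    have : (d : ℤ) ≤ c * q := by exact_mod_cast hle
    push_cast; omega
  rw [hc, Int.ceil_eq_iff]
  constructor
  · calc (c : ℚ) - 1 < d / q := by linarith
      _ ≤ ((d + 1 : ℕ) : ℚ) / q := by gcongr; omega
  · rw [div_le_iff₀ hq0']
    exact_mod_cast hsucc

lemma griesmerSum_two_succ_of_odd {d k : ℕ} (hd : Odd d) (hk : 1 ≤ k) :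
    griesmerSum 2 (d + 1) k = griesmerSum 2 d k + 1 := by
  obtain ⟨k, rfl⟩ := Nat.exists_eq_add_of_le' hk
  simp only [griesmerSum, sum_range_succ', ← Nat.cast_pow]
  rw [sum_congr rfl fun j _ => ceil_succ_div_eq_of_odd hd ((Nat.even_pow' j.succ_ne_zero).2 even_two)
    (by positivity)]
  simp only [pow_zero, Nat.cast_one, div_one, Int.ceil_natCast]
  push_cast; ring

lemma griesmerSum_succ_of_le_pow {q d k : ℕ} (hd : 0 < d) (hdk : d ≤ q ^ k) :
    griesmerSum q d (k + 1) = griesmerSum q d k + 1 := by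
  have hqk : (0 : ℚ) < q ^ k := by exact_mod_cast hd.trans_le hdk
  rw [griesmerSum, sum_range_succ, ← griesmerSum, add_right_inj, Int.ceil_eq_iff]
  constructor
  · rw [Int.cast_one, sub_self]
    positivity
  · rw [div_le_iff₀ hqk, Int.cast_one, one_mul]
    exact_mod_cast hdk

lemma griesmerSum_two_six {k : ℕ} (hk : 3 ≤ k) : griesmerSum 2 6 k = k + 8 := by
  induction k, hk using Nat.le_induction with
  | base => norm_num [griesmerSum, sum_range_succ]
  | succ k hk ih =>
    have h8 : 6 ≤ 2 ^ k := le_trans (by norm_num) (Nat.pow_le_pow_right two_pos hk)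
    rw [griesmerSum_succ_of_le_pow (by norm_num) h8, ih]
    push_cast; ring

theorem griesmerSum_two_six_le_of_systematicOn {n k : ℕ} {C : Finset (Fin n → Fin 2)}
    {hkn : k ≤ n} (hsys : systematicOn hkn C) (hk : 1 ≤ k)
    (hdist : ∀ x ∈ C, ∀ y ∈ C, x ≠ y → 6 ≤ hammingDist x y) :
    griesmerSum 2 6 k ≤ n := by
  have hplotkin := plotkin_bound_of_systematicOn hsys (min_le_left k 3) hdist
  rcases (show k = 1 ∨ k = 2 ∨ 3 ≤ k by omega) with rfl | rfl | hk3
  · norm_num [griesmerSum] at hplotkin ⊢; omega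
  · norm_num [griesmerSum, sum_range_succ] at hplotkin ⊢; omega
  · rw [min_eq_right hk3] at hplotkin
    rw [griesmerSum_two_six hk3]
    omega

theorem stmt13_general {n k d : ℕ}
    (C : Finset (Fin n → Fin 2)) (hk : 1 ≤ k) (hkn : k ≤ n)
    (hsys : systematicOn hkn C)
    (hmin : minDistIs C d)
    (hd : d = 5 ∨ d = 6) :
    (n : ℤ) ≥ griesmerSum 2 d k := by
  rcases hd with rfl | rfl
  · have h := griesmerSum_two_six_le_of_systematicOn (systematicOn_image_parityExtend hsys) hk
      (succ_le_hammingDist_image_parityExtend (by decide) hmin.1)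
    rw [griesmerSum_two_succ_of_odd (by decide) hk] at h
    push_cast at h
    omega
  · exact griesmerSum_two_six_le_of_systematicOn hsys hk hmin.1

theorem stmt13 {n k d : ℕ}
    (C : Finset (Fin n → Fin 2)) (hk : 1 ≤ k) (hkn : k ≤ n)
    (hcard : C.card = 2 ^ k)
    (hsys : systematicOn hkn C)
    (hmin : minDistIs C d)
    (hd : d = 5 ∨ d = 6) :
    (n : ℤ) ≥ griesmerSum 2 d k :=
  stmt13_general C hk hkn hsys hmin hd
end
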